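/- arXiv:2209.02931 — 2 statements merged into one kernel-verified Lean document; each statement's English description precedes it below -/
import Mathlib

section
/- Let m ≥ 3 be an integer and set d = 2m ≥ 6. Let β ∈ ℝ, r > 0 with |β| < r, set α = √(r² − β²) > 0, let L > 0, and write θ₀ = arctan(β/α), θ₁ = arctan((β + L)/α). Then ∫₀^L (t² + 2βt + r²)^{1−m} dt = α^{3−d} [ 2^{5−d} Σ_{i=0}^{m−3} C(d−4, i) ( sin((d−4−2i)θ₁) − sin((d−4−2i)θ₀) ) / (d−4−2i) + 2^{4−d} C(d−4, m−2) (θ₁ − θ₀) ], where C(n, k) denotes the binomial coefficient. -/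
/-!
Substituting `t + β = α tan θ` turns `t² + 2βt + r² = (t + β)² + α²` into `α² / cos² θ` and
`dt` into `α dθ / cos² θ`, so the integrand becomes `α^(-(2k+1)) cos^(2k) θ dθ` with `m = k + 2`.
Expanding `(2 cos θ)^(2k) = (e^{iθ} + e^{-iθ})^(2k)` binomially and pairing the terms `j` and
`2k - j` writes `cos^(2k)` as a cosine polynomial, which integrates term by term.
-/

open Real Finset

theorem two_mul_cos_pow (n : ℕ) (θ : ℝ) :
    (2 * cos θ) ^ n = ∑ j ∈ range (n + 1), (n.choose j : ℝ) * cos ((n - 2 * j : ℝ) * θ) := by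
  have hterm : ∀ j ∈ range (n + 1),
      Complex.exp (-θ * Complex.I) ^ j * Complex.exp (θ * Complex.I) ^ (n - j) * (n.choose j : ℂ)
        = ((n.choose j : ℝ) : ℂ) * Complex.exp (((n - 2 * j : ℝ) * θ : ℝ) * Complex.I) := by
    intro j hj
    have hjn : j ≤ n := Nat.lt_succ_iff.mp (mem_range.mp hj)
    rw [← Complex.exp_nat_mul, ← Complex.exp_nat_mul, ← Complex.exp_add, mul_comm]
    push_cast [hjn]
    ring_nf
  have hre := congrArg Complex.re
    (add_pow (Complex.exp (-θ * Complex.I)) (Complex.exp (θ * Complex.I)) n)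
  rw [add_comm, ← Complex.two_cos, sum_congr rfl hterm, Complex.re_sum] at hre
  simp only [Complex.re_ofReal_mul, Complex.exp_ofReal_mul_I_re] at hre
  rw [← hre]
  norm_cast

theorem sum_range_two_mul_add_one_of_symm {M : Type*} [AddCommMonoid M] (f : ℕ → M) (k : ℕ)
    (hf : ∀ j ≤ 2 * k, f (2 * k - j) = f j) :
    ∑ j ∈ range (2 * k + 1), f j = 2 • ∑ j ∈ range k, f j + f k := by
  have hupper : ∑ j ∈ range k, f (k + 1 + j) = ∑ j ∈ range k, f j := by
    rw [← sum_range_reflect]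
    refine sum_congr rfl fun j hj => ?_
    have hjk := mem_range.mp hj
    rw [← hf j (by omega)]
    congr 1
    omega
  rw [show 2 * k + 1 = (k + 1) + k by ring, sum_range_add, hupper, sum_range_succ]
  abel

theorem two_mul_cos_pow_two_mul (k : ℕ) (θ : ℝ) :
    (2 * cos θ) ^ (2 * k) =
      2 * ∑ i ∈ range k, ((2 * k).choose i : ℝ) * cos (((2 * k - 2 * i : ℕ) : ℝ) * θ)
        + ((2 * k).choose k : ℝ) := by
  rw [two_mul_cos_pow, sum_range_two_mul_add_one_of_symm, nsmul_eq_mul]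
  · push_cast
    congr 1
    · congr 1
      refine sum_congr rfl fun i hi => ?_
      push_cast [show 2 * i ≤ 2 * k by have := mem_range.mp hi; omega]
      rfl
    · ring_nf; simp
  · intro j hj
    push_cast [hj, Nat.choose_symm hj]
    rw [← cos_neg]
    ring_nf

noncomputable def cosPowTwoMulPrimitive (k : ℕ) (θ : ℝ) : ℝ :=
  (2 * ∑ i ∈ range k, ((2 * k).choose i : ℝ) *
      (sin (((2 * k - 2 * i : ℕ) : ℝ) * θ) / ((2 * k - 2 * i : ℕ) : ℝ))
    + ((2 * k).choose k : ℝ) * θ) / 2 ^ (2 * k)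

theorem hasDerivAt_cosPowTwoMulPrimitive (k : ℕ) (θ : ℝ) :
    HasDerivAt (cosPowTwoMulPrimitive k) (cos θ ^ (2 * k)) θ := by
  have hsin : ∀ i ∈ range k, HasDerivAt
      (fun θ => ((2 * k).choose i : ℝ) *
        (sin (((2 * k - 2 * i : ℕ) : ℝ) * θ) / ((2 * k - 2 * i : ℕ) : ℝ)))
      (((2 * k).choose i : ℝ) * cos (((2 * k - 2 * i : ℕ) : ℝ) * θ)) θ := by
    intro i hi
    have hn : ((2 * k - 2 * i : ℕ) : ℝ) ≠ 0 := by
      have := mem_range.mp hi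
      exact Nat.cast_ne_zero.mpr (by omega)
    refine ((((hasDerivAt_id' θ).const_mul ((2 * k - 2 * i : ℕ) : ℝ)).sin.div_const
      ((2 * k - 2 * i : ℕ) : ℝ)).const_mul ((2 * k).choose i : ℝ)).congr_deriv ?_
    field_simp
  have := (((HasDerivAt.fun_sum hsin).const_mul 2).add
    ((hasDerivAt_id' θ).const_mul ((2 * k).choose k : ℝ))).div_const (2 ^ (2 * k))
  refine this.congr_deriv ?_
  rw [mul_one, div_eq_iff (by positivity), ← two_mul_cos_pow_two_mul, mul_pow, mul_comm]

theorem cos_sq_arctan_div {α : ℝ} (hα : α ≠ 0) (x : ℝ) :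
    cos (arctan (x / α)) ^ 2 = α ^ 2 / (x ^ 2 + α ^ 2) := by
  rw [cos_sq_arctan]
  field_simp
  ring

theorem hasDerivAt_arctan_div {α : ℝ} (hα : α ≠ 0) (x : ℝ) :
    HasDerivAt (fun x => arctan (x / α)) (α / (x ^ 2 + α ^ 2)) x := by
  convert ((hasDerivAt_id' x).div_const α).arctan using 1
  field_simp
  ring

theorem integral_inv_sq_add_sq_pow_succ {α : ℝ} (hα : 0 < α) (β a b : ℝ) (k : ℕ) :
    ∫ t in a..b, (((t + β) ^ 2 + α ^ 2) ^ (k + 1))⁻¹ =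
      (cosPowTwoMulPrimitive k (arctan ((b + β) / α)) -
        cosPowTwoMulPrimitive k (arctan ((a + β) / α))) / α ^ (2 * k + 1) := by
  have hq : ∀ t : ℝ, 0 < (t + β) ^ 2 + α ^ 2 := fun t => by positivity
  rw [sub_div]
  refine intervalIntegral.integral_eq_sub_of_hasDerivAt
    (f := fun t => cosPowTwoMulPrimitive k (arctan ((t + β) / α)) / α ^ (2 * k + 1))
    (fun t _ => ?_) ?_
  · refine (((hasDerivAt_cosPowTwoMulPrimitive k _).comp t
      ((hasDerivAt_arctan_div hα.ne' (t + β)).comp_add_const t β)).div_const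
      (α ^ (2 * k + 1))).congr_deriv ?_
    rw [pow_mul, cos_sq_arctan_div hα.ne', div_pow, ← pow_mul]
    have := hq t
    field_simp
    ring
  · exact (Continuous.inv₀ (by fun_prop) fun t => (pow_pos (hq t) _).ne').intervalIntegrable _ _

theorem lineSource_integral_even_dim_general (m : ℕ) (hm : 3 ≤ m) (d : ℕ) (hd : d = 2 * m)
    (β r α L : ℝ) (hβ : |β| < r) (hα : α = Real.sqrt (r ^ 2 - β ^ 2))
    (θ₀ θ₁ : ℝ) (hθ₀ : θ₀ = Real.arctan (β / α))
    (hθ₁ : θ₁ = Real.arctan ((β + L) / α)) :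
    (∫ t in (0:ℝ)..L, (t ^ 2 + 2 * β * t + r ^ 2) ^ ((1 : ℤ) - m)) =
      α ^ ((3:ℤ) - d) *
        ((2:ℝ) ^ ((5:ℤ) - d) *
            ∑ i ∈ Finset.range (m - 2),
              (Nat.choose (d - 4) i : ℝ) *
                (Real.sin (((d - 4 - 2 * i : ℕ) : ℝ) * θ₁)
                  - Real.sin (((d - 4 - 2 * i : ℕ) : ℝ) * θ₀)) / ((d - 4 - 2 * i : ℕ) : ℝ)
          + (2:ℝ) ^ ((4:ℤ) - d) * (Nat.choose (d - 4) (m - 2) : ℝ) * (θ₁ - θ₀)) := by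
  obtain ⟨k, rfl⟩ : ∃ k, m = k + 2 := ⟨m - 2, by omega⟩
  have hβr : 0 < r ^ 2 - β ^ 2 := sub_pos.mpr (sq_lt_sq' (abs_lt.mp hβ).1 (abs_lt.mp hβ).2)
  have hα_sq : α ^ 2 = r ^ 2 - β ^ 2 := by rw [hα, sq_sqrt hβr.le]
  have hα_pos : 0 < α := by rw [hα]; exact sqrt_pos.mpr hβr
  have hintegrand : ∀ t : ℝ, (t ^ 2 + 2 * β * t + r ^ 2) ^ ((1 : ℤ) - (k + 2 : ℕ)) =
      (((t + β) ^ 2 + α ^ 2) ^ (k + 1))⁻¹ := fun t => by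
    rw [show (1 : ℤ) - (k + 2 : ℕ) = -(k + 1 : ℕ) by push_cast; ring, zpow_neg, zpow_natCast,
      hα_sq]
    ring_nf
  obtain ⟨h5, h4, h3⟩ : (2 : ℝ) ^ ((5 : ℤ) - d) = 2 * (2 ^ (2 * k))⁻¹ ∧
      (2 : ℝ) ^ ((4 : ℤ) - d) = (2 ^ (2 * k))⁻¹ ∧ α ^ ((3 : ℤ) - d) = (α ^ (2 * k + 1))⁻¹ := by
    subst hd
    refine ⟨?_, ?_, ?_⟩ <;> rw [← zpow_natCast, ← zpow_neg]
    · rw [← zpow_one_add₀ two_ne_zero]; push_cast; ring_nf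
    all_goals push_cast; ring_nf
  rw [h5, h4, h3]
  simp only [intervalIntegral.integral_congr fun t _ => hintegrand t,
    integral_inv_sq_add_sq_pow_succ hα_pos, hθ₀, hθ₁, hd,
    show 2 * (k + 2) - 4 = 2 * k by omega, show k + 2 - 2 = k by omega, zero_add, add_comm L β]
  simp only [cosPowTwoMulPrimitive, mul_sub, sub_div, mul_div_assoc, sum_sub_distrib]
  ring

/-- Explicit evaluation, in even dimensions `d = 2m ≥ 6`, of the integral
`∫₀^L (t² + 2βt + r²)^{1−m} dt` appearing in the construction of the line-source singular
function `Φ_L`, where `α = √(r² − β²) > 0`, `θ₀ = arctan(β/α)` and `θ₁ = arctan((β+L)/α)`. -/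
theorem lineSource_integral_even_dim (m : ℕ) (hm : 3 ≤ m) (d : ℕ) (hd : d = 2 * m)
    (β r α L : ℝ) (hr : 0 < r) (hβ : |β| < r) (hα : α = Real.sqrt (r ^ 2 - β ^ 2))
    (hL : 0 < L) (θ₀ θ₁ : ℝ) (hθ₀ : θ₀ = Real.arctan (β / α))
    (hθ₁ : θ₁ = Real.arctan ((β + L) / α)) :
    (∫ t in (0:ℝ)..L, (t ^ 2 + 2 * β * t + r ^ 2) ^ ((1 : ℤ) - m)) =
      α ^ ((3:ℤ) - d) *
        ((2:ℝ) ^ ((5:ℤ) - d) *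
            ∑ i ∈ Finset.range (m - 2),
              (Nat.choose (d - 4) i : ℝ) *
                (Real.sin (((d - 4 - 2 * i : ℕ) : ℝ) * θ₁)
                  - Real.sin (((d - 4 - 2 * i : ℕ) : ℝ) * θ₀)) / ((d - 4 - 2 * i : ℕ) : ℝ)
          + (2:ℝ) ^ ((4:ℤ) - d) * (Nat.choose (d - 4) (m - 2) : ℝ) * (θ₁ - θ₀)) :=
  lineSource_integral_even_dim_general m hm d hd β r α L hβ hα θ₀ θ₁ hθ₀ hθ₁
end

section
/- Let m ≥ 2 be an integer and set d = 2m + 1 ≥ 5. Let β ∈ ℝ, r > 0 with |β| < r, set α = √(r² − β²) > 0, let L > 0, and write θ₀ = arctan(β/α), θ₁ = arctan((β + L)/α). Then ∫₀^L (t² + 2βt + r²)^{(2−d)/2} dt = ∫₀^L ((t + β)² + α²)^{1 − d/2} dt = α^{3−d} · 2^{5−d} Σ_{i=0}^{m−2} C(d−4, i) ( sin((d−4−2i)θ₁) − sin((d−4−2i)θ₀) ) / (d−4−2i), where C(n, k) denotes the binomial coefficient and the power (1 − d/2) of the positive quantity (t+β)² + α² is the real power with exponent (2 − d)/2. -/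
open Finset

lemma cos_pow_odd_expand (p : ℕ) (x : ℝ) :
    Real.cos x ^ (2 * p + 1) * 2 ^ (2 * p) =
      ∑ i ∈ Finset.range (p + 1),
        ((2 * p + 1).choose i : ℝ) * Real.cos (((2 * p + 1 - 2 * i : ℕ) : ℝ) * x) := by
  set n : ℕ := 2 * p + 1 with hn
  -- complex identity
  have hC : ((Real.cos x : ℂ)) ^ n * 2 ^ n =
      ∑ j ∈ Finset.range (n + 1),
        (n.choose j : ℂ) * Complex.exp ((2 * (j : ℂ) - (n : ℂ)) * (x : ℂ) * Complex.I) := by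
    rw [Complex.ofReal_cos]
    have h2 : (Complex.cos x) ^ n * 2 ^ n = (2 * Complex.cos x) ^ n := by ring
    rw [h2, Complex.two_cos, add_pow]
    refine Finset.sum_congr rfl fun j hj => ?_
    have hjn : j ≤ n := Nat.lt_succ_iff.mp (Finset.mem_range.mp hj)
    rw [← Complex.exp_nat_mul, ← Complex.exp_nat_mul, ← Complex.exp_add]
    rw [mul_comm]
    congr 1
    have : ((n - j : ℕ) : ℂ) = (n : ℂ) - j := by
      push_cast [Nat.cast_sub hjn]; ring_nf
    rw [this]
    ring
  -- take real parts
  have hR : Real.cos x ^ n * 2 ^ n =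
      ∑ j ∈ Finset.range (n + 1),
        (n.choose j : ℝ) * Real.cos ((2 * (j : ℝ) - (n : ℝ)) * x) := by
    have := congrArg Complex.re hC
    rw [show ((Real.cos x : ℂ)) ^ n * 2 ^ n = ((Real.cos x ^ n * 2 ^ n : ℝ) : ℂ) by push_cast; ring] at this
    rw [Complex.ofReal_re] at this
    rw [this, Complex.re_sum]
    refine Finset.sum_congr rfl fun j hj => ?_
    have harg : (2 * (j : ℂ) - (n : ℂ)) * (x : ℂ) * Complex.I
        = ((2 * (j : ℝ) - (n : ℝ)) * x : ℝ) * Complex.I := by push_cast; ring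
    simp only [Complex.mul_re, Complex.natCast_re, Complex.natCast_im, zero_mul, sub_zero]
    rw [harg, Complex.exp_ofReal_mul_I_re]
  -- split the sum
  have hsplit : (Finset.range (n + 1)) = Finset.range ((p + 1) + (p + 1)) := by
    congr 1; omega
  rw [hsplit, Finset.sum_range_add] at hR
  set f : ℕ → ℝ := fun j => (n.choose j : ℝ) * Real.cos ((2 * (j : ℝ) - (n : ℝ)) * x) with hf
  have h1 : ∑ j ∈ Finset.range (p + 1), f j
      = ∑ i ∈ Finset.range (p + 1),
        ((2 * p + 1).choose i : ℝ) * Real.cos (((2 * p + 1 - 2 * i : ℕ) : ℝ) * x) := by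
    refine Finset.sum_congr rfl fun j hj => ?_
    have hjp : j ≤ p := Nat.lt_succ_iff.mp (Finset.mem_range.mp hj)
    have hcast : ((2 * p + 1 - 2 * j : ℕ) : ℝ) = -(2 * (j : ℝ) - (n : ℝ)) := by
      have : (2 * p + 1 - 2 * j : ℕ) = n - 2 * j := by omega
      rw [this, Nat.cast_sub (by omega)]
      push_cast; ring
    rw [hcast, neg_mul, Real.cos_neg]
  have h2 : ∑ i ∈ Finset.range (p + 1), f ((p + 1) + i)
      = ∑ i ∈ Finset.range (p + 1),
        ((2 * p + 1).choose i : ℝ) * Real.cos (((2 * p + 1 - 2 * i : ℕ) : ℝ) * x) := by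
    rw [← Finset.sum_range_reflect]
    refine Finset.sum_congr rfl fun i hi => ?_
    have hip : i ≤ p := Nat.lt_succ_iff.mp (Finset.mem_range.mp hi)
    have hidx : (p + 1) + (p + 1 - 1 - i) = n - i := by omega
    rw [hidx]
    have hch : (n.choose (n - i)) = n.choose i := by
      rw [Nat.choose_symm (by omega)]
    have hcast : (2 * ((n - i : ℕ) : ℝ) - (n : ℝ)) = ((2 * p + 1 - 2 * i : ℕ) : ℝ) := by
      rw [Nat.cast_sub (by omega), show (2 * p + 1 - 2 * i : ℕ) = n - 2 * i by omega,
        Nat.cast_sub (by omega)]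
      push_cast; ring
    simp only [hf]
    rw [hch, hcast]
  rw [h1, h2] at hR
  have : Real.cos x ^ n * 2 ^ n = Real.cos x ^ n * 2 ^ (2 * p) * 2 := by
    rw [hn]; ring
  rw [this] at hR
  linarith

lemma arctan_shift_hasDerivAt (β α : ℝ) (hα : 0 < α) (t : ℝ) :
    HasDerivAt (fun t => Real.arctan ((t + β) / α)) (α / ((t + β) ^ 2 + α ^ 2)) t := by
  have h1 : HasDerivAt (fun t : ℝ => (t + β) / α) (1 / α) t := by
    simpa using ((hasDerivAt_id t).add_const β).div_const α
  have h2 := (Real.hasDerivAt_arctan ((t + β) / α)).comp t h1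
  refine h2.congr_deriv ?_
  field_simp
  ring

lemma term_hasDerivAt (β α : ℝ) (hα : 0 < α) (k : ℝ) (hk : k ≠ 0) (t : ℝ) :
    HasDerivAt (fun t => Real.sin (k * Real.arctan ((t + β) / α)) / k)
      (Real.cos (k * Real.arctan ((t + β) / α)) * (α / ((t + β) ^ 2 + α ^ 2))) t := by
  have h := (((arctan_shift_hasDerivAt β α hα t).const_mul k).sin).div_const k
  refine h.congr_deriv ?_
  field_simp

/-- Explicit evaluation, in odd dimensions `d = 2m + 1 ≥ 5`, of the integral
`∫₀^L (t² + 2βt + r²)^{1−d/2} dt` appearing in the construction of the line-source singular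
function `Φ_L`, where `α = √(r² − β²) > 0`, `θ₀ = arctan(β/α)` and `θ₁ = arctan((β+L)/α)`;
the power `1 − d/2` of the positive quantity `(t+β)² + α²` is the real power with
exponent `(2 − d)/2`. -/
theorem lineSource_integral_odd_dim (m : ℕ) (hm : 2 ≤ m) (d : ℕ) (hd : d = 2 * m + 1)
    (β r α L : ℝ) (hr : 0 < r) (hβ : |β| < r) (hα : α = Real.sqrt (r ^ 2 - β ^ 2))
    (hL : 0 < L) (θ₀ θ₁ : ℝ) (hθ₀ : θ₀ = Real.arctan (β / α))
    (hθ₁ : θ₁ = Real.arctan ((β + L) / α)) :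
    (∫ t in (0:ℝ)..L, (t ^ 2 + 2 * β * t + r ^ 2) ^ (((2:ℝ) - d) / 2)) =
      (∫ t in (0:ℝ)..L, ((t + β) ^ 2 + α ^ 2) ^ (((2:ℝ) - d) / 2)) ∧
    (∫ t in (0:ℝ)..L, ((t + β) ^ 2 + α ^ 2) ^ (((2:ℝ) - d) / 2)) =
      α ^ ((3:ℤ) - d) * (2:ℝ) ^ ((5:ℤ) - d) *
        ∑ i ∈ Finset.range (m - 1),
          (Nat.choose (d - 4) i : ℝ) *
            (Real.sin (((d - 4 - 2 * i : ℕ) : ℝ) * θ₁)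
              - Real.sin (((d - 4 - 2 * i : ℕ) : ℝ) * θ₀)) / ((d - 4 - 2 * i : ℕ) : ℝ) := by
  have hβ2 : β ^ 2 < r ^ 2 := by
    have := sq_abs β
    nlinarith [abs_nonneg β]
  have hα2 : α ^ 2 = r ^ 2 - β ^ 2 := by
    rw [hα, Real.sq_sqrt (by linarith)]
  have hα0 : 0 < α := by
    rw [hα]; exact Real.sqrt_pos.mpr (by linarith)
  constructor
  · have hpt : ∀ t : ℝ, t ^ 2 + 2 * β * t + r ^ 2 = (t + β) ^ 2 + α ^ 2 := by
      intro t; rw [hα2]; ring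
    simp only [hpt]
  · -- second part
    obtain ⟨p, hp⟩ : ∃ p, m = p + 2 := ⟨m - 2, by omega⟩
    have hdp : d = 2 * p + 5 := by omega
    have hd4 : d - 4 = 2 * p + 1 := by omega
    have hm1 : m - 1 = p + 1 := by omega
    rw [hd4, hm1]
    set e : ℝ := ((2:ℝ) - d) / 2 with he
    set c : ℝ := α ^ ((3:ℤ) - d) * (2:ℝ) ^ ((5:ℤ) - d) with hc
    set k : ℕ → ℝ := fun i => ((2 * p + 1 - 2 * i : ℕ) : ℝ) with hk
    set F : ℝ → ℝ := fun t => c * ∑ i ∈ Finset.range (p + 1),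
      ((2 * p + 1).choose i : ℝ) * (Real.sin (k i * Real.arctan ((t + β) / α)) / k i) with hF
    -- zpow rewrites
    have h3 : α ^ ((3:ℤ) - d) = (α ^ (2 * p + 2))⁻¹ := by
      rw [show (3:ℤ) - d = -((2 * p + 2 : ℕ) : ℤ) by push_cast [hdp]; ring,
        zpow_neg, zpow_natCast]
    have h5 : (2:ℝ) ^ ((5:ℤ) - d) = ((2:ℝ) ^ (2 * p))⁻¹ := by
      rw [show (5:ℤ) - d = -((2 * p : ℕ) : ℤ) by push_cast [hdp]; ring,
        zpow_neg, zpow_natCast]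
    have hderiv : ∀ t : ℝ, HasDerivAt F (((t + β) ^ 2 + α ^ 2) ^ e) t := by
      intro t
      have hQ : 0 < (t + β) ^ 2 + α ^ 2 := by positivity
      have hsum : HasDerivAt
          (fun t => ∑ i ∈ Finset.range (p + 1),
            ((2 * p + 1).choose i : ℝ) * (Real.sin (k i * Real.arctan ((t + β) / α)) / k i))
          (∑ i ∈ Finset.range (p + 1),
            ((2 * p + 1).choose i : ℝ) *
              (Real.cos (k i * Real.arctan ((t + β) / α)) * (α / ((t + β) ^ 2 + α ^ 2)))) t := by
        apply HasDerivAt.fun_sum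
        intro i hi
        have hki : k i ≠ 0 := by
          have hip : i ≤ p := Nat.lt_succ_iff.mp (Finset.mem_range.mp hi)
          simp only [hk]
          exact Nat.cast_ne_zero.mpr (by omega)
        exact (term_hasDerivAt β α hα0 (k i) hki t).const_mul _
      have h := hsum.const_mul c
      have heq : c * (∑ i ∈ Finset.range (p + 1),
            ((2 * p + 1).choose i : ℝ) *
              (Real.cos (k i * Real.arctan ((t + β) / α)) * (α / ((t + β) ^ 2 + α ^ 2))))
          = ((t + β) ^ 2 + α ^ 2) ^ e := by
        set w : ℝ := Real.sqrt ((t + β) ^ 2 + α ^ 2) with hwdef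
        have hw : 0 < w := Real.sqrt_pos.mpr hQ
        have hw2 : w ^ 2 = (t + β) ^ 2 + α ^ 2 := Real.sq_sqrt hQ.le
        have hcos : Real.cos (Real.arctan ((t + β) / α)) = α / w := by
          rw [Real.cos_arctan]
          have h1u : 1 + ((t + β) / α) ^ 2 = (w / α) ^ 2 := by
            rw [div_pow, div_pow, hw2]
            field_simp
            ring
          rw [h1u, Real.sqrt_sq (by positivity), one_div, inv_div]
        have hfac : (∑ i ∈ Finset.range (p + 1),
              ((2 * p + 1).choose i : ℝ) *
                (Real.cos (k i * Real.arctan ((t + β) / α)) * (α / ((t + β) ^ 2 + α ^ 2))))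
            = (Real.cos (Real.arctan ((t + β) / α)) ^ (2 * p + 1) * 2 ^ (2 * p))
                * (α / ((t + β) ^ 2 + α ^ 2)) := by
          rw [cos_pow_odd_expand p (Real.arctan ((t + β) / α)), Finset.sum_mul]
          exact Finset.sum_congr rfl fun i _ => by simp only [hk]; ring
        have hQe : ((t + β) ^ 2 + α ^ 2) ^ e = (w ^ (2 * p + 3))⁻¹ := by
          have hww : w ^ (2 * p + 3)
              = ((t + β) ^ 2 + α ^ 2) ^ (((2 * p + 3 : ℕ) : ℝ) / 2) := by
            rw [hwdef, Real.sqrt_eq_rpow,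
              ← Real.rpow_natCast (((t + β) ^ 2 + α ^ 2) ^ ((1:ℝ)/2)) (2 * p + 3),
              ← Real.rpow_mul hQ.le]
            congr 1
            push_cast; ring
          rw [hww, ← Real.rpow_neg hQ.le, he]
          congr 1
          push_cast [hdp]; ring
        rw [hfac, hcos, hQe, hc, h3, h5, ← hw2,
          pow_add α (2 * p) 2, pow_add (α / w) (2 * p) 1, pow_add w (2 * p) 3, div_pow]
        have hαne : α ≠ 0 := hα0.ne'
        have hwne : w ≠ 0 := hw.ne'
        have hAne : α ^ (2 * p) ≠ 0 := pow_ne_zero _ hαne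
        have hWne : w ^ (2 * p) ≠ 0 := pow_ne_zero _ hwne
        have hTne : (2:ℝ) ^ (2 * p) ≠ 0 := by positivity
        field_simp
      rw [heq] at h
      exact h
    have hcont : Continuous fun t : ℝ => ((t + β) ^ 2 + α ^ 2) ^ e := by
      apply Continuous.rpow_const
      · fun_prop
      · intro t; left; positivity
    have hint : (∫ t in (0:ℝ)..L, ((t + β) ^ 2 + α ^ 2) ^ e) = F L - F 0 :=
      intervalIntegral.integral_eq_sub_of_hasDerivAt (fun t _ => hderiv t)
        (hcont.intervalIntegrable 0 L)
    rw [hint, hF]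
    beta_reduce
    have hsL : Real.arctan ((L + β) / α) = θ₁ := by rw [hθ₁, add_comm]
    have hs0 : Real.arctan ((0 + β) / α) = θ₀ := by rw [hθ₀, zero_add]
    rw [hsL, hs0, ← mul_sub, ← Finset.sum_sub_distrib]
    congr 1
    exact Finset.sum_congr rfl fun i _ => by simp only [hk]; ring
end
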